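/- arXiv:1501.01668 — 2 statements merged into one kernel-verified Lean document; each statement's English description precedes it below -/
import Mathlib

section
/- For λ > 0, v ≥ 0, c > 0 and a ≥ 0, the integral ∫₀^∞ exp(−λπc(r + a)² + λπc·a²)·2πλr dr equals (1/c)·(1 − 2b√π·e^{b²}·Q(√2·b)), where b = a·√(πλc) and Q is the Gaussian tail function. -/
open Real MeasureTheory Set Filter

/-!
Write `r = (r + a) - a` and shift the variable by `a`. With `k = λπc`, the part
`x e^{-k x²}` has the elementary antiderivative `-e^{-k x²}/(2k)`, and the remaining Gaussian tail
`∫_a^∞ e^{-k x²} dx` equals `√(π/k) Q(√(2k) a)` after the substitution `t = √(2k) x`.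
-/

noncomputable def gaussianTail (x : ℝ) : ℝ :=
  (√(2 * π))⁻¹ * ∫ t in Ioi x, exp (-t ^ 2 / 2)

lemma setIntegral_Ioi_zero_comp_add_right {E : Type*} [NormedAddCommGroup E] [NormedSpace ℝ E]
    (f : ℝ → E) (a : ℝ) :
    ∫ r in Ioi 0, f (r + a) = ∫ x in Ioi a, f x := by
  have h := (measurePreserving_add_right volume a).setIntegral_preimage_emb
    (measurableEmbedding_addRight a) f (Ioi a)
  simpa only [preimage_add_const_Ioi, sub_self] using h

lemma integral_Ioi_exp_neg_mul_sq {k : ℝ} (hk : 0 < k) (a : ℝ) :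
    ∫ x in Ioi a, exp (-(k * x ^ 2)) = √(π / k) * gaussianTail (√(2 * k) * a) := by
  have hs : 0 < √(2 * k) := by positivity
  have hsubst := integral_comp_mul_left_Ioi (fun t => exp (-t ^ 2 / 2)) a hs
  have hsq : ∀ x, -(√(2 * k) * x) ^ 2 / 2 = -(k * x ^ 2) := fun x => by
    rw [mul_pow, sq_sqrt (by positivity)]; ring
  simp only [hsq, smul_eq_mul] at hsubst
  rw [hsubst, gaussianTail, ← mul_assoc]
  congr 1
  rw [sqrt_div' _ hk.le, sqrt_mul' _ hk.le, sqrt_mul' _ pi_pos.le]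
  have : √2 ≠ 0 := by positivity
  have : √k ≠ 0 := by positivity
  field_simp

lemma integral_Ioi_mul_exp_neg_mul_sq {k : ℝ} (hk : 0 < k) (a : ℝ) :
    ∫ x in Ioi a, x * exp (-(k * x ^ 2)) = exp (-(k * a ^ 2)) / (2 * k) := by
  have hderiv : ∀ x ∈ Ici a, HasDerivAt (fun x => -exp (-(k * x ^ 2)) / (2 * k))
      (x * exp (-(k * x ^ 2))) x := fun x _ => by
    have h : HasDerivAt (fun x => -(k * x ^ 2)) (-(k * (2 * x))) x := by
      simpa using ((hasDerivAt_pow 2 x).const_mul k).fun_neg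
    refine (h.exp.fun_neg.div_const (2 * k)).congr_deriv ?_
    field_simp
  have hint : IntegrableOn (fun x => x * exp (-(k * x ^ 2))) (Ioi a) := by
    simpa only [neg_mul] using (integrable_mul_exp_neg_mul_sq hk).integrableOn
  have hlim : Tendsto (fun x => -exp (-(k * x ^ 2)) / (2 * k)) atTop (nhds 0) := by
    have : Tendsto (fun x : ℝ => exp (-(k * x ^ 2))) atTop (nhds 0) :=
      tendsto_exp_atBot.comp <| tendsto_neg_atTop_atBot.comp <|
        (tendsto_pow_atTop two_ne_zero).const_mul_atTop hk
    simpa using (this.neg).div_const (2 * k)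
  rw [integral_Ioi_of_hasDerivAt_of_tendsto' hderiv hint hlim]
  ring

lemma integral_Ioi_zero_mul_exp_neg_mul_sq_add {k : ℝ} (hk : 0 < k) (a : ℝ) :
    ∫ r in Ioi 0, r * exp (-(k * (r + a) ^ 2)) =
      exp (-(k * a ^ 2)) / (2 * k) - a * √(π / k) * gaussianTail (√(2 * k) * a) := by
  have hshift := setIntegral_Ioi_zero_comp_add_right (fun x => (x - a) * exp (-(k * x ^ 2))) a
  simp only [add_sub_cancel_right] at hshift
  have hint₁ : IntegrableOn (fun x => x * exp (-(k * x ^ 2))) (Ioi a) := by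
    simpa only [neg_mul] using (integrable_mul_exp_neg_mul_sq hk).integrableOn
  have hint₀ : IntegrableOn (fun x => a * exp (-(k * x ^ 2))) (Ioi a) := by
    simpa only [neg_mul] using ((integrable_exp_neg_mul_sq hk).const_mul a).integrableOn
  simp_rw [hshift, sub_mul, integral_sub hint₁ hint₀, integral_const_mul,
    integral_Ioi_mul_exp_neg_mul_sq hk, integral_Ioi_exp_neg_mul_sq hk, mul_assoc]

theorem stmt4_general (lam c a : ℝ) (hlam : 0 < lam) (hc : 0 < c)
    (Q : ℝ → ℝ)
    (hQ : ∀ x, Q x = (Real.sqrt (2*π))⁻¹ * ∫ t in Set.Ioi x, Real.exp (-t^2/2))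
    (b : ℝ) (hb : b = a * Real.sqrt (π*lam*c)) :
    (∫ r in Set.Ioi (0:ℝ), Real.exp (-(lam*π*c*(r+a)^2) + lam*π*c*a^2) * (2*π*lam*r))
      = (1/c) * (1 - 2*b*Real.sqrt π * Real.exp (b^2) * Q (Real.sqrt 2 * b)) := by
  obtain rfl : Q = gaussianTail := funext hQ
  set k := lam * π * c with hk_def
  have hk : 0 < k := by positivity
  obtain rfl : b = a * √k := by rw [hb, hk_def, show π * lam * c = lam * π * c by ring]
  have hintegrand : ∀ r : ℝ, exp (-(k * (r + a) ^ 2) + k * a ^ 2) * (2 * π * lam * r) =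
      2 * π * lam * exp (k * a ^ 2) * (r * exp (-(k * (r + a) ^ 2))) := fun r => by
    rw [exp_add]; ring
  simp_rw [hintegrand, integral_const_mul, integral_Ioi_zero_mul_exp_neg_mul_sq_add hk,
    sqrt_mul' 2 hk.le, sqrt_div' π hk.le, mul_pow, sq_sqrt hk.le, exp_neg]
  have : √k ≠ 0 := by positivity
  have : √π ≠ 0 := by positivity
  field_simp
  set G := gaussianTail (a * √k * √2)
  linear_combination (2 * k * a * exp (k * a ^ 2) * √π * G - √k) * hk_def
    + 2 * k * a * exp (k * a ^ 2) * √π * G * mul_self_sqrt hk.le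

theorem stmt4 (lam v c a : ℝ) (hlam : 0 < lam) (hv : 0 ≤ v) (hc : 0 < c) (ha : 0 ≤ a)
    (Q : ℝ → ℝ)
    (hQ : ∀ x, Q x = (Real.sqrt (2*π))⁻¹ * ∫ t in Set.Ioi x, Real.exp (-t^2/2))
    (b : ℝ) (hb : b = a * Real.sqrt (π*lam*c)) :
    (∫ r in Set.Ioi (0:ℝ), Real.exp (-(lam*π*c*(r+a)^2) + lam*π*c*a^2) * (2*π*lam*r))
      = (1/c) * (1 - 2*b*Real.sqrt π * Real.exp (b^2) * Q (Real.sqrt 2 * b)) :=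
  stmt4_general lam c a hlam hc Q hQ b hb
end

section
/- The approximate handoff rate H(v, λ) = 1 − (1/π)∫₀^π ∫₀^∞ 2πλr·exp(−λ(v²(π−θ) + rv·a(θ)) − πλr²) dr dθ equals 1 − (1/π)∫₀^π [1 − 2b(θ)√π·e^{b(θ)²}·Q(√2·b(θ))]·exp(−λv²(π−θ)) dθ, where b(θ) = √(πλ)·v·a(θ)/(2π) and a(θ) = 2cos θ(π−θ) + sin θ. -/
/-!
For fixed `θ` the factor `exp (-λv²(π - θ))` leaves the `r`-integral. With `s = √(πλ)`, completing
the square `πλr² + λva r = (sr + b)² - b²` and substituting `u = sr + b` turn the remaining integral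
into `2 e^{b²} ∫_b^∞ (u - b) e^{-u²} du = 1 - 2b e^{b²} ∫_b^∞ e^{-u²} du`, and
`∫_b^∞ e^{-u²} du = √π Q(√2 b)`.
-/

open Real MeasureTheory Set Filter Topology

theorem integral_comp_add_right_Ioi {E : Type*} [NormedAddCommGroup E] [NormedSpace ℝ E]
    (g : ℝ → E) (a c : ℝ) :
    ∫ x in Ioi a, g (x + c) = ∫ x in Ioi (a + c), g x := by
  have := (measurePreserving_add_right volume c).setIntegral_preimage_emb
    (measurableEmbedding_addRight c) g (Ioi (a + c))
  rwa [preimage_add_const_Ioi, add_sub_cancel_right] at this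

theorem integral_comp_mul_left_add_Ioi {E : Type*} [NormedAddCommGroup E] [NormedSpace ℝ E]
    (g : ℝ → E) (a b : ℝ) {s : ℝ} (hs : 0 < s) :
    ∫ x in Ioi a, g (s * x + b) = s⁻¹ • ∫ u in Ioi (s * a + b), g u := by
  rw [integral_comp_mul_left_Ioi (fun y => g (y + b)) a hs, integral_comp_add_right_Ioi]

theorem integral_Ioi_mul_exp_neg_sq (b : ℝ) :
    ∫ t in Ioi b, t * exp (-t ^ 2) = exp (-b ^ 2) / 2 := by
  have hderiv : ∀ x ∈ Ici b, HasDerivAt (fun u => -exp (-u ^ 2) / 2) (x * exp (-x ^ 2)) x := by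
    intro x _
    have h : HasDerivAt (fun u => -exp (-u ^ 2) / 2) (-(exp (-x ^ 2) * -(2 * x)) / 2) x := by
      simpa using ((hasDerivAt_pow 2 x).neg.exp.neg).div_const 2
    exact h.congr_deriv (by ring)
  have hint : IntegrableOn (fun t => t * exp (-t ^ 2)) (Ioi b) := by
    simpa using (integrable_mul_exp_neg_mul_sq one_pos).integrableOn
  have htend : Tendsto (fun u => -exp (-u ^ 2) / 2) atTop (𝓝 0) := by
    simpa using ((tendsto_exp_atBot.comp
      (tendsto_neg_atTop_atBot.comp (tendsto_pow_atTop two_ne_zero))).neg).div_const 2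
  rw [integral_Ioi_of_hasDerivAt_of_tendsto' hderiv hint htend]
  ring

theorem integral_Ioi_exp_neg_sq_comp_mul_sqrt_two (x : ℝ) :
    ∫ t in Ioi (√2 * x), exp (-t ^ 2 / 2) = √2 * ∫ t in Ioi x, exp (-t ^ 2) := by
  rw [← integral_comp_mul_left_Ioi' _ x (by positivity : (0:ℝ) < √2), smul_eq_mul]
  congr 2 with t
  rw [mul_pow, sq_sqrt zero_le_two]
  ring_nf

theorem integral_Ioi_mul_exp_neg_linear_sub_sq (b : ℝ) {s : ℝ} (hs : 0 < s) :
    ∫ r in Ioi (0:ℝ), 2 * s ^ 2 * r * exp (-(2 * s * b * r) - s ^ 2 * r ^ 2)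
      = 1 - 2 * b * exp (b ^ 2) * ∫ t in Ioi b, exp (-t ^ 2) := by
  have hint_mul : IntegrableOn (fun t => t * exp (-t ^ 2)) (Ioi b) := by
    simpa using (integrable_mul_exp_neg_mul_sq one_pos).integrableOn
  have hint : IntegrableOn (fun t => exp (-t ^ 2)) (Ioi b) := by
    simpa using (integrable_exp_neg_mul_sq one_pos).integrableOn
  have hsquare : ∀ r, 2 * s ^ 2 * r * exp (-(2 * s * b * r) - s ^ 2 * r ^ 2)
      = (2 * s * exp (b ^ 2)) * (((s * r + b) - b) * exp (-(s * r + b) ^ 2)) := by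
    intro r
    rw [show -(2 * s * b * r) - s ^ 2 * r ^ 2 = b ^ 2 + -(s * r + b) ^ 2 by ring, exp_add]
    ring
  calc ∫ r in Ioi (0:ℝ), 2 * s ^ 2 * r * exp (-(2 * s * b * r) - s ^ 2 * r ^ 2)
      = (2 * s * exp (b ^ 2)) * (s⁻¹ * ∫ u in Ioi b, (u - b) * exp (-u ^ 2)) := by
        simp_rw [hsquare, integral_const_mul]
        rw [integral_comp_mul_left_add_Ioi (fun u => (u - b) * exp (-u ^ 2)) 0 b hs,
          mul_zero, zero_add, smul_eq_mul]
    _ = 2 * exp (b ^ 2) * ((∫ u in Ioi b, u * exp (-u ^ 2)) - b * ∫ u in Ioi b, exp (-u ^ 2)) := by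
        simp_rw [sub_mul]
        rw [integral_sub hint_mul (hint.const_mul b), integral_const_mul]
        field_simp
    _ = 1 - 2 * b * exp (b ^ 2) * ∫ t in Ioi b, exp (-t ^ 2) := by
        rw [integral_Ioi_mul_exp_neg_sq, mul_sub, ← mul_div_assoc, mul_assoc 2, ← exp_add,
          add_neg_cancel, exp_zero]
        ring

theorem stmt6_general (lam v : ℝ) (hlam : 0 < lam)
    (Q : ℝ → ℝ)
    (hQ : ∀ x, Q x = (Real.sqrt (2*π))⁻¹ * ∫ t in Set.Ioi x, Real.exp (-t^2/2))
    (a : ℝ → ℝ)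
    (b : ℝ → ℝ) (hb : ∀ θ, b θ = Real.sqrt (π*lam) * (v * a θ) / (2*π)) :
    1 - (1/π) * ∫ θ in (0:ℝ)..π, (∫ r in Set.Ioi (0:ℝ),
          (2*π*lam*r) * Real.exp (-(lam*(v^2*(π - θ) + r*v*(a θ))) - π*lam*r^2))
      = 1 - (1/π) * ∫ θ in (0:ℝ)..π,
          (1 - 2*(b θ)*Real.sqrt π * Real.exp ((b θ)^2) * Q (Real.sqrt 2 * b θ))
            * Real.exp (-(lam*v^2*(π - θ))) := by
  set s := √(π * lam)
  have hs : 0 < s := by positivity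
  have hs_sq : s ^ 2 = π * lam := sq_sqrt (by positivity)
  have hQ_tail (x : ℝ) : √π * Q (√2 * x) = ∫ t in Ioi x, exp (-t ^ 2) := by
    rw [hQ, integral_Ioi_exp_neg_sq_comp_mul_sqrt_two, sqrt_mul zero_le_two]
    field_simp
  congr 2
  refine intervalIntegral.integral_congr fun θ _ => ?_
  have hslope : 2 * s * b θ = lam * v * a θ := by
    rw [hb]
    field_simp
    linear_combination v * a θ * hs_sq
  have hsplit : ∀ r, (2*π*lam*r) * exp (-(lam*(v^2*(π - θ) + r*v*(a θ))) - π*lam*r^2)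
      = exp (-(lam*v^2*(π - θ))) * (2 * s ^ 2 * r * exp (-(2 * s * b θ * r) - s ^ 2 * r ^ 2)) := by
    intro r
    rw [hslope, hs_sq, mul_left_comm, ← exp_add]
    ring_nf
  simp_rw [hsplit, integral_const_mul, integral_Ioi_mul_exp_neg_linear_sub_sq (b θ) hs]
  rw [← hQ_tail]
  ring

theorem stmt6 (lam v : ℝ) (hlam : 0 < lam) (hv : 0 ≤ v)
    (Q : ℝ → ℝ)
    (hQ : ∀ x, Q x = (Real.sqrt (2*π))⁻¹ * ∫ t in Set.Ioi x, Real.exp (-t^2/2))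
    (a : ℝ → ℝ) (ha : ∀ θ, a θ = 2*Real.cos θ*(π - θ) + Real.sin θ)
    (b : ℝ → ℝ) (hb : ∀ θ, b θ = Real.sqrt (π*lam) * (v * a θ) / (2*π)) :
    1 - (1/π) * ∫ θ in (0:ℝ)..π, (∫ r in Set.Ioi (0:ℝ),
          (2*π*lam*r) * Real.exp (-(lam*(v^2*(π - θ) + r*v*(a θ))) - π*lam*r^2))
      = 1 - (1/π) * ∫ θ in (0:ℝ)..π,
          (1 - 2*(b θ)*Real.sqrt π * Real.exp ((b θ)^2) * Q (Real.sqrt 2 * b θ))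
            * Real.exp (-(lam*v^2*(π - θ))) :=
  stmt6_general lam v hlam Q hQ a b hb
end
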